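/- Model C is ergodic with unique invariant measure δ_{∘^ℤ}: the Dirac measure at the empty configuration ∘^ℤ is the unique probability measure ν on {∘,•}^ℤ with νF_C = ν, and for every probability measure ν on {∘,•}^ℤ, the iterates νF_C^n converge weakly to δ_{∘^ℤ} as n → ∞. (Corollary 5.3.) -/

import Mathlib

/-!
Under `𝒞` a particle at `k` moves to `k` (update `↑`) or to `k + 1` (update `→`), and particles
landing on the same site merge. So `𝒞(z, u)` meets a window `[a, b]` iff `z` meets the window whose
endpoints were shifted left according to `u (a - 1)` and `u b`: under `ν ⊗ λ` the width `b - a`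
performs a lazy simple random walk, and site `i` is occupied after `n` steps with probability at
most the probability `survivalProb n 0` that this walk, started at `0`, has not yet reached `-1`.
The limit of `survivalProb n g` as `n → ∞` is a bounded harmonic function of `g ≥ 0` vanishing
at `-1`, hence zero. Since every neighbourhood of `∘^ℤ` contains a cylinder on which finitely many
sites are empty, the portmanteau theorem gives `ν F_C^n → δ_{∘^ℤ}`, and an invariant `ν` equals
this limit.
-/

open MeasureTheory ProbabilityTheory Filter

/-!
Conventions: a configuration of model C is `z : ℤ → Bool` (`false` = ∘ empty,
`true` = • particle); an update is `u : ℤ → Bool` (`true` = ↑, `false` = →).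
The space `ℤ → Bool` carries the product topology (with `Bool` discrete) and the
product (Borel) σ-algebra.
-/

/-- The local map `𝒞` of model C: the `i`-th coordinate of `𝒞(z,u)` is `•` iff
`(z_{i-1}z_i, u_{i-1}u_i) ∈ {(•∘, →⋅), (∘•, ⋅↑), (••, ↑↑), (••, →⋅)}`. -/
def modelC (z u : ℤ → Bool) : ℤ → Bool := fun i =>
  match z (i - 1), z i with
  | true, false => !u (i - 1)
  | false, true => u i
  | true, true => !u (i - 1) || u i
  | false, false => false

/-- `lam` is the product over `ℤ` of the uniform measure on the two-element update
alphabet `𝒰`. -/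
def IsUniformProduct (lam : Measure (ℤ → Bool)) : Prop :=
  IsProbabilityMeasure lam ∧
    ∀ (s : Finset ℤ) (f : ℤ → Bool),
      lam {u | ∀ i ∈ s, u i = f i} = (1 / 2 : ENNReal) ^ s.card

/-- `ν F_C`: the pushforward of `ν ⊗ lam` under `𝒞`. -/
noncomputable def FC (lam ν : Measure (ℤ → Bool)) : Measure (ℤ → Bool) :=
  Measure.map (fun p : (ℤ → Bool) × (ℤ → Bool) => modelC p.1 p.2) (ν.prod lam)

/-- The empty configuration `∘^ℤ`. -/
def emptyConfig : ℤ → Bool := fun _ => false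

open Topology

theorem eq_zero_of_harmonic_of_le {L : ℤ → ℝ} {C : ℝ}
    (hL : ∀ g : ℕ, L (g + 1) + L (g - 1) = 2 * L g) (hbot : L (-1) = 0) (h0 : 0 ≤ L 0)
    (hC : ∀ g, L g ≤ C) : L 0 = 0 := by
  have linear (g : ℕ) : L g = (g + 1) * L 0 ∧ L (g + 1) = (g + 2) * L 0 := by
    induction g with
    | zero => have := hL 0; simp_all
    | succ g ih =>
      refine ⟨by exact_mod_cast ih.2, ?_⟩
      have := hL (g + 1)
      push_cast at this ⊢
      rw [add_sub_cancel_right, ih.1, ih.2] at this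
      linarith
  by_contra hne
  have hpos : 0 < L 0 := lt_of_le_of_ne h0 (Ne.symm hne)
  obtain ⟨g, hg⟩ := exists_nat_gt (C / L 0)
  rw [div_lt_iff₀ hpos] at hg
  linarith [hC g, (linear g).1]

/-- The probability that the lazy walk with steps `-1, 0, 0, +1` (each with probability `1/4`),
started at `g`, stays nonnegative during `n` steps. -/
noncomputable def survivalProb : ℕ → ℤ → ℝ
  | 0, g => if 0 ≤ g then 1 else 0
  | n + 1, g => if 0 ≤ g then
      (survivalProb n (g - 1) + 2 * survivalProb n g + survivalProb n (g + 1)) / 4 else 0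

theorem survivalProb_of_neg {n : ℕ} {g : ℤ} (hg : g < 0) : survivalProb n g = 0 := by
  cases n <;> simp [survivalProb, not_le.mpr hg]

theorem survivalProb_zero_of_nonneg {g : ℤ} (hg : 0 ≤ g) : survivalProb 0 g = 1 := by
  simp [survivalProb, hg]

theorem survivalProb_succ_of_nonneg (n : ℕ) {g : ℤ} (hg : 0 ≤ g) : survivalProb (n + 1) g =
    (survivalProb n (g - 1) + 2 * survivalProb n g + survivalProb n (g + 1)) / 4 := by
  simp [survivalProb, hg]

theorem survivalProb_mem_Icc (n : ℕ) (g : ℤ) : survivalProb n g ∈ Set.Icc 0 1 := by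
  induction n generalizing g with
  | zero => unfold survivalProb; split_ifs <;> norm_num
  | succ n ih =>
    rcases lt_or_ge g 0 with hg | hg
    · simp [survivalProb_of_neg hg]
    · rw [survivalProb_succ_of_nonneg n hg]
      obtain ⟨h₁, h₁'⟩ := ih (g - 1)
      obtain ⟨h₂, h₂'⟩ := ih g
      obtain ⟨h₃, h₃'⟩ := ih (g + 1)
      constructor <;> linarith

theorem survivalProb_succ_le (n : ℕ) (g : ℤ) : survivalProb (n + 1) g ≤ survivalProb n g := by
  rcases lt_or_ge g 0 with hg | hg
  · simp [survivalProb_of_neg hg]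
  induction n generalizing g with
  | zero => rw [survivalProb_zero_of_nonneg hg]; exact (survivalProb_mem_Icc 1 g).2
  | succ n ih =>
    have h₁ : survivalProb (n + 1) (g - 1) ≤ survivalProb n (g - 1) := by
      rcases lt_or_ge (g - 1) 0 with h | h
      · simp [survivalProb_of_neg h]
      · exact ih _ h
    linarith [ih g hg, ih (g + 1) (by omega), survivalProb_succ_of_nonneg (n + 1) hg,
      survivalProb_succ_of_nonneg n hg]

theorem tendsto_survivalProb_zero : Tendsto (fun n ↦ survivalProb n 0) atTop (𝓝 0) := by
  set L : ℤ → ℝ := fun g ↦ ⨅ n, survivalProb n g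
  have bdd (g : ℤ) : BddBelow (Set.range fun n ↦ survivalProb n g) :=
    ⟨0, by rintro _ ⟨n, rfl⟩; exact (survivalProb_mem_Icc n g).1⟩
  have tendsto (g : ℤ) : Tendsto (fun n ↦ survivalProb n g) atTop (𝓝 (L g)) :=
    tendsto_atTop_ciInf (antitone_nat_of_succ_le fun n ↦ survivalProb_succ_le n g) (bdd g)
  suffices L 0 = 0 by simpa [this] using tendsto 0
  refine eq_zero_of_harmonic_of_le (C := 1) (fun g ↦ ?_) ?_
    (le_ciInf fun n ↦ (survivalProb_mem_Icc n 0).1)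
    fun g ↦ (ciInf_le (bdd g) 0).trans (survivalProb_mem_Icc 0 g).2
  · have hstep : Tendsto (fun n ↦ survivalProb (n + 1) g) atTop
        (𝓝 ((L (g - 1) + 2 * L g + L (g + 1)) / 4)) := by
      simp_rw [survivalProb_succ_of_nonneg _ (Int.natCast_nonneg g)]
      exact (((tendsto _).add ((tendsto _).const_mul 2)).add (tendsto _)).div_const 4
    have := tendsto_nhds_unique ((tendsto g).comp (tendsto_add_atTop_nat 1)) hstep
    linarith
  · simp [L, survivalProb_of_neg (show (-1 : ℤ) < 0 by norm_num)]

theorem tendsto_diracProba_of_tendsto_measure_compl {Ω : Type*} [TopologicalSpace Ω]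
    [MeasurableSpace Ω] [OpensMeasurableSpace Ω] {x : Ω} {μs : ℕ → ProbabilityMeasure Ω}
    (h : ∀ U ∈ 𝓝 x, Tendsto (fun n ↦ (μs n : Measure Ω) Uᶜ) atTop (𝓝 0)) :
    Tendsto μs atTop (𝓝 (diracProba x)) := by
  refine tendsto_of_forall_isOpen_le_liminf_nat' fun G hG ↦ ?_
  by_cases hx : x ∈ G
  · have hG1 : Tendsto (fun n ↦ (μs n : Measure Ω) G) atTop (𝓝 1) := by
      simpa only [← prob_compl_eq_one_sub hG.measurableSet.compl, compl_compl, tsub_zero] using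
        ENNReal.Tendsto.sub tendsto_const_nhds (h G (hG.mem_nhds hx)) (Or.inl ENNReal.one_ne_top)
    rw [hG1.liminf_eq]
    exact prob_le_one
  · simp [diracProba_toMeasure_apply' x hG.measurableSet, hx]

theorem tendsto_measure_compl_of_mem_nhds_pi {ι α β : Type*} [TopologicalSpace α]
    [MeasurableSpace α] {l : Filter β} {μs : β → Measure (ι → α)} {x : ι → α}
    (h : ∀ i, Tendsto (fun n ↦ μs n {z | z i ≠ x i}) l (𝓝 0))
    {U : Set (ι → α)} (hU : U ∈ 𝓝 x) : Tendsto (fun n ↦ μs n Uᶜ) l (𝓝 0) := by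
  rw [nhds_pi, Filter.mem_pi'] at hU
  obtain ⟨I, t, ht, hIt⟩ := hU
  have hsub : Uᶜ ⊆ ⋃ i ∈ I, {z | z i ≠ x i} := by
    intro z hz
    by_contra hz'
    simp only [Set.mem_iUnion, Set.mem_ofPred_eq, not_exists, not_not] at hz'
    exact hz (hIt fun i hi ↦ hz' i hi ▸ mem_of_mem_nhds (ht i))
  have hsum : Tendsto (fun n ↦ ∑ i ∈ I, μs n {z | z i ≠ x i}) l (𝓝 0) := by
    simpa using tendsto_finsetSum I fun i _ ↦ h i
  exact tendsto_of_tendsto_of_tendsto_of_le_of_le tendsto_const_nhds hsum (fun _ ↦ bot_le)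
    fun n ↦ (measure_mono hsub).trans (measure_biUnion_finset_le I _)

def occupied (a b : ℤ) : Set (ℤ → Bool) := {z | ∃ j ∈ Set.Icc a b, z j = true}

theorem measurableSet_occupied (a b : ℤ) : MeasurableSet (occupied a b) := by
  unfold occupied
  measurability

theorem occupied_self (i : ℤ) : occupied i i = {z | z i = true} := by
  simp [occupied]

theorem occupied_eq_empty {a b : ℤ} (h : b < a) : occupied a b = ∅ := by
  ext z
  simp only [occupied, Set.mem_Icc, Set.mem_ofPred_eq, Set.mem_empty_iff_false, iff_false]
  omega

theorem measurable_modelC : Measurable fun p : (ℤ → Bool) × (ℤ → Bool) ↦ modelC p.1 p.2 := by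
  unfold modelC
  measurability

def jumpTarget (u : ℤ → Bool) (k : ℤ) : ℤ := if u k then k else k + 1

theorem modelC_eq_true_iff (z u : ℤ → Bool) (j : ℤ) :
    modelC z u j = true ↔ ∃ k, z k = true ∧ jumpTarget u k = j := by
  unfold modelC jumpTarget
  grind

theorem jumpTarget_mem_Icc_iff (u : ℤ → Bool) (a b k : ℤ) :
    jumpTarget u k ∈ Set.Icc a b ↔
      k ∈ Set.Icc (if u (a - 1) then a else a - 1) (if u b then b else b - 1) := by
  unfold jumpTarget
  grind

theorem modelC_mem_occupied_iff (z u : ℤ → Bool) (a b : ℤ) :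
    modelC z u ∈ occupied a b ↔
      z ∈ occupied (if u (a - 1) then a else a - 1) (if u b then b else b - 1) := by
  simp only [occupied, Set.mem_ofPred_eq, modelC_eq_true_iff, ← jumpTarget_mem_Icc_iff]
  grind

theorem preimage_occupied (a b : ℤ) :
    (fun p : (ℤ → Bool) × (ℤ → Bool) ↦ modelC p.1 p.2) ⁻¹' occupied a b =
      ⋃ c : Bool × Bool, occupied (if c.1 then a else a - 1) (if c.2 then b else b - 1) ×ˢ
        {u | u (a - 1) = c.1 ∧ u b = c.2} := by
  ext ⟨z, u⟩
  simp [modelC_mem_occupied_iff]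

theorem IsUniformProduct.measure_pair {lam : Measure (ℤ → Bool)} (hlam : IsUniformProduct lam)
    {i j : ℤ} (hij : i ≠ j) (x y : Bool) : lam {u | u i = x ∧ u j = y} = 1 / 4 := by
  have := hlam.2 {i, j} fun k ↦ if k = i then x else y
  simp_all [Finset.card_pair hij, Ne.symm hij, ← ENNReal.inv_pow]
  norm_num

theorem FC_apply_occupied {lam : Measure (ℤ → Bool)} (hlam : IsUniformProduct lam)
    (μ : Measure (ℤ → Bool)) [SFinite μ] {a b : ℤ} (hab : a ≤ b) :
    FC lam μ (occupied a b) = (μ (occupied a b) + μ (occupied a (b - 1)) +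
      μ (occupied (a - 1) b) + μ (occupied (a - 1) (b - 1))) / 4 := by
  have := hlam.1
  have hdisj : Pairwise (Function.onFun Disjoint fun c : Bool × Bool ↦
      occupied (if c.1 then a else a - 1) (if c.2 then b else b - 1) ×ˢ
        {u : ℤ → Bool | u (a - 1) = c.1 ∧ u b = c.2}) := by
    intro c c' hne
    refine Set.disjoint_left.mpr fun p hp hp' ↦ hne ?_
    simp only [Set.mem_prod, Set.mem_ofPred_eq] at hp hp'
    exact Prod.ext (hp.2.1.symm.trans hp'.2.1) (hp.2.2.symm.trans hp'.2.2)
  rw [FC, Measure.map_apply measurable_modelC (measurableSet_occupied a b), preimage_occupied,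
    measure_iUnion hdisj fun c ↦ (measurableSet_occupied _ _).prod (by measurability)]
  simp only [Measure.prod_prod, hlam.measure_pair (show a - 1 ≠ b by omega), tsum_fintype,
    Fintype.sum_prod_type, Fintype.sum_bool, ite_true, Bool.false_eq_true, ite_false,
    div_eq_mul_inv]
  ring

theorem FC_real_occupied {lam : Measure (ℤ → Bool)} (hlam : IsUniformProduct lam)
    (μ : Measure (ℤ → Bool)) [IsFiniteMeasure μ] {a b : ℤ} (hab : a ≤ b) :
    (FC lam μ).real (occupied a b) = (μ.real (occupied a b) + μ.real (occupied a (b - 1)) +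
      μ.real (occupied (a - 1) b) + μ.real (occupied (a - 1) (b - 1))) / 4 := by
  simp [measureReal_def, FC_apply_occupied hlam μ hab, ENNReal.toReal_add, measure_ne_top]

theorem isProbabilityMeasure_FC {lam : Measure (ℤ → Bool)} [IsProbabilityMeasure lam]
    (μ : Measure (ℤ → Bool)) [IsProbabilityMeasure μ] : IsProbabilityMeasure (FC lam μ) :=
  Measure.isProbabilityMeasure_map measurable_modelC.aemeasurable

theorem isProbabilityMeasure_iterate_FC {lam : Measure (ℤ → Bool)} [IsProbabilityMeasure lam]
    (ν : Measure (ℤ → Bool)) [IsProbabilityMeasure ν] (n : ℕ) :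
    IsProbabilityMeasure ((FC lam)^[n] ν) := by
  induction n with
  | zero => assumption
  | succ n ih => rw [Function.iterate_succ_apply']; exact isProbabilityMeasure_FC (lam := lam) _

theorem FC_dirac_emptyConfig (lam : Measure (ℤ → Bool)) [IsProbabilityMeasure lam] :
    FC lam (Measure.dirac emptyConfig) = Measure.dirac emptyConfig := by
  have : (fun p : (ℤ → Bool) × (ℤ → Bool) ↦ modelC p.1 p.2) ∘ Prod.mk emptyConfig =
      fun _ ↦ emptyConfig := rfl
  rw [FC, Measure.dirac_prod, Measure.map_map measurable_modelC measurable_prodMk_left, this,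
    Measure.map_const, measure_univ, one_smul]

theorem measureReal_iterate_FC_occupied_le {lam : Measure (ℤ → Bool)}
    (hlam : IsUniformProduct lam) (ν : Measure (ℤ → Bool)) [IsProbabilityMeasure ν] (n : ℕ)
    (a b : ℤ) : ((FC lam)^[n] ν).real (occupied a b) ≤ survivalProb n (b - a) := by
  have := hlam.1
  have := isProbabilityMeasure_iterate_FC (lam := lam) ν
  induction n generalizing a b with
  | zero =>
    rcases lt_or_ge b a with hab | hab
    · simp [occupied_eq_empty hab, survivalProb_of_neg (sub_neg.mpr hab)]
    · rw [survivalProb_zero_of_nonneg (sub_nonneg.mpr hab)]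
      exact measureReal_le_one (μ := ν)
  | succ n ih =>
    rcases lt_or_ge b a with hab | hab
    · simp [occupied_eq_empty hab, survivalProb_of_neg (sub_neg.mpr hab)]
    rw [Function.iterate_succ_apply', FC_real_occupied hlam _ hab,
      survivalProb_succ_of_nonneg n (sub_nonneg.mpr hab)]
    have h₁ := ih a b
    have h₂ := ih a (b - 1)
    have h₃ := ih (a - 1) b
    have h₄ := ih (a - 1) (b - 1)
    rw [show b - 1 - a = b - a - 1 by ring] at h₂
    rw [show b - (a - 1) = b - a + 1 by ring] at h₃
    rw [show b - 1 - (a - 1) = b - a by ring] at h₄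
    linarith

theorem tendsto_iterate_FC_diracProba {lam : Measure (ℤ → Bool)} (hlam : IsUniformProduct lam)
    (ν : Measure (ℤ → Bool)) [IsProbabilityMeasure ν] :
    Tendsto (fun n ↦ show ProbabilityMeasure (ℤ → Bool) from
      ⟨(FC lam)^[n] ν, have := hlam.1; isProbabilityMeasure_iterate_FC ν n⟩) atTop
      (𝓝 (diracProba emptyConfig)) := by
  have := hlam.1
  have := isProbabilityMeasure_iterate_FC (lam := lam) ν
  refine tendsto_diracProba_of_tendsto_measure_compl fun U hU ↦
    tendsto_measure_compl_of_mem_nhds_pi (fun i ↦ ?_) hU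
  have hreal : Tendsto (fun n ↦ ((FC lam)^[n] ν).real (occupied i i)) atTop (𝓝 0) :=
    tendsto_of_tendsto_of_tendsto_of_le_of_le tendsto_const_nhds tendsto_survivalProb_zero
      (fun n ↦ measureReal_nonneg) fun n ↦ by
        simpa using measureReal_iterate_FC_occupied_le hlam ν n i i
  simpa [emptyConfig, occupied_self, measureReal_def, ENNReal.ofReal_toReal, measure_ne_top] using
    ENNReal.tendsto_ofReal hreal

theorem modelC_ergodic (lam : Measure (ℤ → Bool)) (hlam : IsUniformProduct lam) :
    FC lam (Measure.dirac emptyConfig) = Measure.dirac emptyConfig ∧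
    (∀ ν : Measure (ℤ → Bool), IsProbabilityMeasure ν → FC lam ν = ν →
      ν = Measure.dirac emptyConfig) ∧
    (∀ ν : Measure (ℤ → Bool), IsProbabilityMeasure ν →
      ∀ f : BoundedContinuousFunction (ℤ → Bool) ℝ,
        Tendsto (fun n : ℕ => ∫ x, f x ∂((FC lam)^[n] ν)) atTop
          (nhds (∫ x, f x ∂(Measure.dirac emptyConfig)))) := by
  have := hlam.1
  refine ⟨FC_dirac_emptyConfig lam, fun ν _ hfix ↦ ?_, fun ν _ f ↦ ?_⟩
  · have h : Tendsto (fun _ : ℕ ↦ show ProbabilityMeasure (ℤ → Bool) from ⟨ν, ‹_›⟩) atTop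
        (𝓝 (diracProba emptyConfig)) := by
      simpa only [Function.iterate_fixed hfix] using tendsto_iterate_FC_diracProba hlam ν
    exact congrArg ProbabilityMeasure.toMeasure (tendsto_const_nhds_iff.mp h)
  · exact ProbabilityMeasure.tendsto_iff_forall_integral_tendsto.mp
      (tendsto_iterate_FC_diracProba hlam ν) f
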